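/- arXiv:2312.08018 — 3 statements merged into one kernel-verified Lean document; each statement's English description precedes it below -/
import Mathlib

section
/- Let Ψ be smooth on ℝ^{1+2} (r > 0), μ ∈ ℝ, u̲ = (t+r)/2, and let J_1 = −u̲^{2μ} m^{αβ} Q_{αγ}[Ψ] L^γ ∂_β, where Q is the energy-momentum tensor of Ψ. Then the divergence satisfies 𝒟_α J_1^α = −(□Ψ)(u̲^{2μ} LΨ) + (μ − u̲/(2r)) (u̲^{2μ−1}/r^2) (ΩΨ)^2 − (1/(2r)) u̲^{2μ} (LΨ)(L̅Ψ). -/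
noncomputable section

/-- Points of `ℝ^{1+2}`: `(t, x¹, x²)`. -/
abbrev Pt : Type := ℝ × ℝ × ℝ

/-- The coordinate directions `∂_0 = ∂_t, ∂_1, ∂_2`. -/
def e3 : Fin 3 → Pt := ![(1, 0, 0), (0, 1, 0), (0, 0, 1)]

/-- The partial derivative `∂_α φ` at a point. -/
def pd (α : Fin 3) (φ : Pt → ℝ) (p : Pt) : ℝ := fderiv ℝ φ p (e3 α)

/-- `r = |x|`. -/
def rr (p : Pt) : ℝ := Real.sqrt (p.2.1 ^ 2 + p.2.2 ^ 2)

/-- Components of `L = ∂_t + ∂_r` in the coordinate frame. -/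
def Lv (p : Pt) : Fin 3 → ℝ := ![1, p.2.1 / rr p, p.2.2 / rr p]

/-- Components of `L̅ = ∂_t - ∂_r`. -/
def Lbv (p : Pt) : Fin 3 → ℝ := ![1, -(p.2.1 / rr p), -(p.2.2 / rr p)]

/-- Components of `Ω = x¹∂_2 - x²∂_1`. -/
def Ov (p : Pt) : Fin 3 → ℝ := ![0, -p.2.2, p.2.1]

/-- Minkowski metric `m_{αβ} = diag(-1,1,1)` (equal to its inverse `m^{αβ}`). -/
def mlow : Fin 3 → Fin 3 → ℝ := ![![-1, 0, 0], ![0, 1, 0], ![0, 0, 1]]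

/-- Derivative of `φ` along the constant-coefficient vector `X` at `p`. -/
def dvec (X : Fin 3 → ℝ) (φ : Pt → ℝ) (p : Pt) : ℝ := ∑ α : Fin 3, X α * pd α φ p

/-- `u̲ = (t+r)/2`. -/
def ub (p : Pt) : ℝ := (p.1 + rr p) / 2

/-- Components of the energy-momentum tensor
`Q_{αβ}[Ψ] = ∂_αΨ ∂_βΨ - (1/2) m_{αβ} m^{γδ} ∂_γΨ ∂_δΨ`. -/
def Qcomp (Ψ : Pt → ℝ) (α β : Fin 3) (p : Pt) : ℝ :=
  pd α Ψ p * pd β Ψ p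
    - (1 / 2) * mlow α β
      * (∑ γ : Fin 3, ∑ δ : Fin 3, mlow γ δ * pd γ Ψ p * pd δ Ψ p)

/-- The wave operator `□ = -∂_t² + Δ`. -/
def Box (Ψ : Pt → ℝ) (p : Pt) : ℝ :=
  -pd 0 (pd 0 Ψ) p + pd 1 (pd 1 Ψ) p + pd 2 (pd 2 Ψ) p

/-- Coordinate divergence `𝒟_α J^α` of a vector field `J`. -/
def divg (J : Pt → Fin 3 → ℝ) (p : Pt) : ℝ := ∑ α : Fin 3, pd α (fun q => J q α) p

/-- The multiplier current `J₁ = -u̲^{2μ} m^{αβ} Q_{αγ}[Ψ] L^γ ∂_β`. -/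
def J1 (μ : ℝ) (Ψ : Pt → ℝ) (q : Pt) : Fin 3 → ℝ := fun β =>
  -(ub q ^ (2 * μ)) * ∑ α : Fin 3, mlow α β * ∑ γ : Fin 3, Qcomp Ψ α γ q * Lv q γ

namespace DJ1
variable {p : Pt} {f g : Pt → ℝ} {d1 d2 : Fin 3 → ℝ} {Ψ : Pt → ℝ}

def HasPD (f : Pt → ℝ) (p : Pt) (d : Fin 3 → ℝ) : Prop :=
  ∃ L : Pt →L[ℝ] ℝ, HasFDerivAt f L p ∧ ∀ α, L (e3 α) = d α

theorem HasPD.pd_eq (h : HasPD f p d1) (α : Fin 3) : pd α f p = d1 α := by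
  obtain ⟨L, hL, he⟩ := h
  rw [pd, hL.fderiv]; exact he α

theorem HasPD.congr_d (h : HasPD f p d1) (hd : ∀ α, d1 α = d2 α) : HasPD f p d2 := by
  obtain ⟨L, hL, he⟩ := h
  exact ⟨L, hL, fun α => (he α).trans (hd α)⟩

theorem hasPD_of_diff (h : DifferentiableAt ℝ f p) : HasPD f p (fun α => pd α f p) :=
  ⟨fderiv ℝ f p, h.hasFDerivAt, fun _ => rfl⟩

theorem hasPD_const (c : ℝ) : HasPD (fun _ => c) p (fun _ => 0) :=
  ⟨0, hasFDerivAt_const c p, by simp⟩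

theorem HasPD.add (h1 : HasPD f p d1) (h2 : HasPD g p d2) :
    HasPD (fun q => f q + g q) p (fun α => d1 α + d2 α) := by
  obtain ⟨L1, hL1, he1⟩ := h1; obtain ⟨L2, hL2, he2⟩ := h2
  exact ⟨L1 + L2, hL1.add hL2, fun α => by simp [he1 α, he2 α]⟩

theorem HasPD.neg (h1 : HasPD f p d1) :
    HasPD (fun q => -f q) p (fun α => -d1 α) := by
  obtain ⟨L1, hL1, he1⟩ := h1
  exact ⟨-L1, hL1.neg, fun α => by simp [he1 α]⟩

theorem HasPD.sub (h1 : HasPD f p d1) (h2 : HasPD g p d2) :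
    HasPD (fun q => f q - g q) p (fun α => d1 α - d2 α) := by
  obtain ⟨L1, hL1, he1⟩ := h1; obtain ⟨L2, hL2, he2⟩ := h2
  exact ⟨L1 - L2, hL1.sub hL2, fun α => by simp [he1 α, he2 α]⟩

theorem HasPD.mul (h1 : HasPD f p d1) (h2 : HasPD g p d2) :
    HasPD (fun q => f q * g q) p (fun α => f p * d2 α + g p * d1 α) := by
  obtain ⟨L1, hL1, he1⟩ := h1; obtain ⟨L2, hL2, he2⟩ := h2
  exact ⟨f p • L2 + g p • L1, hL1.mul hL2,
    fun α => by simp [he1 α, he2 α]⟩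

theorem HasPD.inv (h1 : HasPD f p d1) (hf : f p ≠ 0) :
    HasPD (fun q => (f q)⁻¹) p (fun α => -d1 α / f p ^ 2) := by
  obtain ⟨L1, hL1, he1⟩ := h1
  refine ⟨-((f p ^ 2)⁻¹ • L1), ?_, fun α => ?_⟩
  · simpa [Function.comp_def] using (hasDerivAt_inv hf).comp_hasFDerivAt p hL1
  · simp only [ContinuousLinearMap.neg_apply, ContinuousLinearMap.coe_smul',
      Pi.smul_apply, he1 α, smul_eq_mul]
    ring

theorem HasPD.div (h1 : HasPD f p d1) (h2 : HasPD g p d2) (hg : g p ≠ 0) :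
    HasPD (fun q => f q / g q) p
      (fun α => (d1 α * g p - f p * d2 α) / g p ^ 2) := by
  have h := h1.mul (h2.inv hg)
  have he : (fun q => f q / g q) = (fun q => f q * (g q)⁻¹) := by
    funext q; rw [div_eq_mul_inv]
  rw [he]
  refine h.congr_d (fun α => ?_)
  field_simp
  ring

theorem HasPD.rpow (h1 : HasPD f p d1) (hf : f p ≠ 0) (e : ℝ) :
    HasPD (fun q => f q ^ e) p (fun α => e * f p ^ (e - 1) * d1 α) := by
  obtain ⟨L1, hL1, he1⟩ := h1
  refine ⟨(e * f p ^ (e - 1)) • L1, ?_, fun α => by simp [he1 α]⟩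
  exact (Real.hasDerivAt_rpow_const (Or.inl hf)).comp_hasFDerivAt p hL1

theorem hasPD_fst : HasPD (fun q : Pt => q.1) p (fun α => (e3 α).1) :=
  ⟨ContinuousLinearMap.fst ℝ ℝ (ℝ × ℝ),
    (ContinuousLinearMap.fst ℝ ℝ (ℝ × ℝ)).hasFDerivAt, fun _ => rfl⟩

theorem hasPD_x : HasPD (fun q : Pt => q.2.1) p (fun α => (e3 α).2.1) :=
  ⟨(ContinuousLinearMap.fst ℝ ℝ ℝ).comp (ContinuousLinearMap.snd ℝ ℝ (ℝ × ℝ)),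
    ((ContinuousLinearMap.fst ℝ ℝ ℝ).comp
      (ContinuousLinearMap.snd ℝ ℝ (ℝ × ℝ))).hasFDerivAt, fun _ => rfl⟩

theorem hasPD_y : HasPD (fun q : Pt => q.2.2) p (fun α => (e3 α).2.2) :=
  ⟨(ContinuousLinearMap.snd ℝ ℝ ℝ).comp (ContinuousLinearMap.snd ℝ ℝ (ℝ × ℝ)),
    ((ContinuousLinearMap.snd ℝ ℝ ℝ).comp
      (ContinuousLinearMap.snd ℝ ℝ (ℝ × ℝ))).hasFDerivAt, fun _ => rfl⟩

theorem hasPD_rr (hr : 0 < rr p) :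
    HasPD rr p (fun α => (p.2.1 * (e3 α).2.1 + p.2.2 * (e3 α).2.2) / rr p) := by
  have hg0 : HasPD (fun q : Pt => q.2.1 * q.2.1 + q.2.2 * q.2.2) p
      (fun α => (p.2.1 * (e3 α).2.1 + p.2.1 * (e3 α).2.1)
        + (p.2.2 * (e3 α).2.2 + p.2.2 * (e3 α).2.2)) :=
    (hasPD_x.mul hasPD_x).add (hasPD_y.mul hasPD_y)
  have he : (fun q : Pt => q.2.1 ^ 2 + q.2.2 ^ 2)
      = (fun q : Pt => q.2.1 * q.2.1 + q.2.2 * q.2.2) := by funext q; ring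
  have hg : HasPD (fun q : Pt => q.2.1 ^ 2 + q.2.2 ^ 2) p
      (fun α => (p.2.1 * (e3 α).2.1 + p.2.1 * (e3 α).2.1)
        + (p.2.2 * (e3 α).2.2 + p.2.2 * (e3 α).2.2)) := he ▸ hg0
  obtain ⟨G, hG, heG⟩ := hg
  have hgp : p.2.1 ^ 2 + p.2.2 ^ 2 ≠ 0 := by
    intro h0
    rw [rr, h0, Real.sqrt_zero] at hr
    exact lt_irrefl 0 hr
  have hrp : rr p ≠ 0 := ne_of_gt hr
  refine ⟨(1 / (2 * Real.sqrt (p.2.1 ^ 2 + p.2.2 ^ 2))) • G, ?_, ?_⟩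
  · exact (Real.hasDerivAt_sqrt hgp).comp_hasFDerivAt p hG
  · intro α
    have hs : Real.sqrt (p.2.1 ^ 2 + p.2.2 ^ 2) = rr p := rfl
    simp only [ContinuousLinearMap.coe_smul', Pi.smul_apply, heG α, smul_eq_mul, hs]
    field_simp
    ring

theorem hasPD_ub (hr : 0 < rr p) :
    HasPD ub p (fun α => ((e3 α).1 + (p.2.1 * (e3 α).2.1 + p.2.2 * (e3 α).2.2) / rr p) / 2) := by
  have h2 : (2 : ℝ) ≠ 0 := two_ne_zero
  have h := (hasPD_fst.add (hasPD_rr hr)).div (hasPD_const 2) h2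
  have he : ub = fun q : Pt => (q.1 + rr q) / 2 := rfl
  rw [he]
  exact h.congr_d (fun α => by field_simp; ring)

theorem diff_pd (hΨ : ContDiff ℝ (⊤ : ℕ∞) Ψ) (γ : Fin 3) :
    DifferentiableAt ℝ (pd γ Ψ) p := by
  have hD : ContDiff ℝ (⊤ : ℕ∞) (fun q : Pt => fderiv ℝ Ψ q (e3 γ)) :=
    (hΨ.fderiv_right (by simp)).clm_apply contDiff_const
  exact (hD.differentiable (by simp)).differentiableAt

theorem hasPD_pd (hΨ : ContDiff ℝ (⊤ : ℕ∞) Ψ) (γ : Fin 3) :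
    HasPD (pd γ Ψ) p (fun α => pd α (pd γ Ψ) p) :=
  hasPD_of_diff (diff_pd hΨ γ)

theorem pd_comm (hΨ : ContDiff ℝ (⊤ : ℕ∞) Ψ) (p : Pt) (α γ : Fin 3) :
    pd α (pd γ Ψ) p = pd γ (pd α Ψ) p := by
  have hd : DifferentiableAt ℝ (fderiv ℝ Ψ) p :=
    ((hΨ.fderiv_right (m := 1) (WithTop.coe_le_coe.mpr le_top)).differentiable one_ne_zero).differentiableAt
  have key : ∀ β δ : Fin 3, pd β (pd δ Ψ) p = fderiv ℝ (fderiv ℝ Ψ) p (e3 β) (e3 δ) := by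
    intro β δ
    have he : pd δ Ψ = fun q => fderiv ℝ Ψ q (e3 δ) := rfl
    rw [pd, he, fderiv_clm_apply (c := fderiv ℝ Ψ) (u := fun _ => e3 δ) hd
      (differentiableAt_const _)]
    simp
  rw [key α γ, key γ α]
  exact (hΨ.contDiffAt.isSymmSndFDerivAt (by simp; exact WithTop.coe_le_coe.mpr le_top)) (e3 α) (e3 γ)

end DJ1

open DJ1 in
set_option maxHeartbeats 2000000 in
/-- divergence identity for `J₁`. -/
theorem divergence_J1 (μ : ℝ) (Ψ : Pt → ℝ) (hΨ : ContDiff ℝ (⊤ : ℕ∞) Ψ) (p : Pt)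
    (hr : 0 < rr p) (hu : 0 < ub p) :
    divg (J1 μ Ψ) p
      = -(Box Ψ p) * (ub p ^ (2 * μ) * dvec (Lv p) Ψ p)
        + (μ - ub p / (2 * rr p)) * (ub p ^ (2 * μ - 1) / rr p ^ 2)
            * (dvec (Ov p) Ψ p) ^ 2
        - (1 / (2 * rr p)) * ub p ^ (2 * μ)
            * (dvec (Lv p) Ψ p * dvec (Lbv p) Ψ p) := by
  have hrne : rr p ≠ 0 := ne_of_gt hr
  have hune : ub p ≠ 0 := ne_of_gt hu
  -- building blocks
  have hP0 : HasPD (pd 0 Ψ) p _ := hasPD_pd hΨ 0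
  have hP1 : HasPD (pd 1 Ψ) p _ := hasPD_pd hΨ 1
  have hP2 : HasPD (pd 2 Ψ) p _ := hasPD_pd hΨ 2
  have hR := hasPD_rr hr
  have hA : HasPD (fun q => ub q ^ (2 * μ)) p _ := (hasPD_ub hr).rpow hune (2 * μ)
  have hC1 : HasPD (fun q : Pt => q.2.1 / rr q) p _ := hasPD_x.div hR hrne
  have hC2 : HasPD (fun q : Pt => q.2.2 / rr q) p _ := hasPD_y.div hR hrne
  have hW : HasPD (fun q => pd 0 Ψ q + q.2.1 / rr q * pd 1 Ψ q + q.2.2 / rr q * pd 2 Ψ q) p _ :=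
    (hP0.add (hC1.mul hP1)).add (hC2.mul hP2)
  have hS : HasPD (fun q => -(pd 0 Ψ q * pd 0 Ψ q) + pd 1 Ψ q * pd 1 Ψ q
      + pd 2 Ψ q * pd 2 Ψ q) p _ := ((hP0.mul hP0).neg.add (hP1.mul hP1)).add (hP2.mul hP2)
  have hF0 := hA.mul ((hP0.mul hW).add (hS.mul (hasPD_const (1/2))))
  have hF1 := (hA.mul ((hP1.mul hW).sub ((hS.mul (hasPD_const (1/2))).mul hC1))).neg
  have hF2 := (hA.mul ((hP2.mul hW).sub ((hS.mul (hasPD_const (1/2))).mul hC2))).neg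
  -- identify J1 components
  have hJ0 : (fun q => J1 μ Ψ q 0) = (fun q =>
      ub q ^ (2*μ) * (pd 0 Ψ q * (pd 0 Ψ q + q.2.1 / rr q * pd 1 Ψ q + q.2.2 / rr q * pd 2 Ψ q)
        + (-(pd 0 Ψ q * pd 0 Ψ q) + pd 1 Ψ q * pd 1 Ψ q + pd 2 Ψ q * pd 2 Ψ q) * (1/2))) := by
    funext q
    simp only [J1, Qcomp, Lv, mlow, Fin.sum_univ_three, Matrix.cons_val_zero,
      Matrix.cons_val_one, Matrix.head_cons, Matrix.cons_val_two, Matrix.tail_cons,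
      Matrix.head_fin_const]
    ring
  have hJ1 : (fun q => J1 μ Ψ q 1) = (fun q =>
      -(ub q ^ (2*μ) * (pd 1 Ψ q * (pd 0 Ψ q + q.2.1 / rr q * pd 1 Ψ q + q.2.2 / rr q * pd 2 Ψ q)
        - (-(pd 0 Ψ q * pd 0 Ψ q) + pd 1 Ψ q * pd 1 Ψ q + pd 2 Ψ q * pd 2 Ψ q) * (1/2)
            * (q.2.1 / rr q)))) := by
    funext q
    simp only [J1, Qcomp, Lv, mlow, Fin.sum_univ_three, Matrix.cons_val_zero,
      Matrix.cons_val_one, Matrix.head_cons, Matrix.cons_val_two, Matrix.tail_cons,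
      Matrix.head_fin_const]
    ring
  have hJ2 : (fun q => J1 μ Ψ q 2) = (fun q =>
      -(ub q ^ (2*μ) * (pd 2 Ψ q * (pd 0 Ψ q + q.2.1 / rr q * pd 1 Ψ q + q.2.2 / rr q * pd 2 Ψ q)
        - (-(pd 0 Ψ q * pd 0 Ψ q) + pd 1 Ψ q * pd 1 Ψ q + pd 2 Ψ q * pd 2 Ψ q) * (1/2)
            * (q.2.2 / rr q)))) := by
    funext q
    simp only [J1, Qcomp, Lv, mlow, Fin.sum_univ_three, Matrix.cons_val_zero,
      Matrix.cons_val_one, Matrix.head_cons, Matrix.cons_val_two, Matrix.tail_cons,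
      Matrix.head_fin_const]
    ring
  rw [divg, Fin.sum_univ_three, hJ0, hJ1, hJ2,
    hF0.pd_eq 0, hF1.pd_eq 1, hF2.pd_eq 2]
  have hr2 : p.2.1 ^ 2 + p.2.2 ^ 2 = rr p ^ 2 := (Real.sq_sqrt (by positivity)).symm
  have hAB : ub p ^ (2 * μ) = ub p ^ (2 * μ - 1) * ub p := by
    have h := Real.rpow_add hu (2 * μ - 1) 1
    rw [Real.rpow_one] at h
    rw [← h]
    congr 1
    ring
  simp only [Box, dvec, Lv, Lbv, Ov, Fin.sum_univ_three, Matrix.cons_val_zero,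
    Matrix.cons_val_one, Matrix.head_cons, Matrix.cons_val_two, Matrix.tail_cons,
    Matrix.head_fin_const, e3]
  norm_num
  rw [pd_comm hΨ p 1 0, pd_comm hΨ p 2 0, pd_comm hΨ p 2 1, hAB]
  set X := p.2.1 with hX
  set Y := p.2.2 with hY
  set R := rr p with hR'
  set U := ub p with hU
  set B := U ^ (2 * μ - 1) with hB
  set P0 := pd 0 Ψ p with hP0'
  set P1 := pd 1 Ψ p with hP1'
  set P2 := pd 2 Ψ p with hP2'
  set H00 := pd 0 (pd 0 Ψ) p with h00'
  set H01 := pd 0 (pd 1 Ψ) p with h01'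
  set H02 := pd 0 (pd 2 Ψ) p with h02'
  set H11 := pd 1 (pd 1 Ψ) p with h11'
  set H12 := pd 1 (pd 2 Ψ) p with h12'
  set H22 := pd 2 (pd 2 Ψ) p with h22'
  field_simp
  linear_combination (U * B * P0 ^ 2 - R * B * μ * (P0 ^ 2 + P1 ^ 2 + P2 ^ 2)) * hr2
end
end

section
/- Let Ψ be smooth on ℝ^{1+2} (r > 0) and J_2 = −m^{αβ} Q_{αγ}[Ψ] L̅^γ ∂_β. Then 𝒟_α J_2^α = −(□Ψ)(L̅Ψ) + (1/(2r^3))(ΩΨ)^2 + (1/(2r)) (LΨ)(L̅Ψ). -/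
noncomputable section

/-- The multiplier current `J₂ = -m^{αβ} Q_{αγ}[Ψ] L̅^γ ∂_β`. -/
def J2 (Ψ : Pt → ℝ) (q : Pt) : Fin 3 → ℝ := fun β =>
  -∑ α : Fin 3, mlow α β * ∑ γ : Fin 3, Qcomp Ψ α γ q * Lbv q γ

/-! ### Auxiliary machinery -/

/-- coordinate CLM `q ↦ q.2.1` -/
def aux_c1 : Pt →L[ℝ] ℝ := (ContinuousLinearMap.fst ℝ ℝ ℝ).comp (ContinuousLinearMap.snd ℝ ℝ (ℝ × ℝ))

/-- coordinate CLM `q ↦ q.2.2` -/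
def aux_c2 : Pt →L[ℝ] ℝ := (ContinuousLinearMap.snd ℝ ℝ ℝ).comp (ContinuousLinearMap.snd ℝ ℝ (ℝ × ℝ))

lemma contDiff_pd (Ψ : Pt → ℝ) (hΨ : ContDiff ℝ (⊤ : ℕ∞) Ψ) (i : Fin 3) :
    ContDiff ℝ (⊤ : ℕ∞) (pd i Ψ) :=
  (hΨ.fderiv_right (by simp)).clm_apply contDiff_const

lemma pd_pd_symm (Ψ : Pt → ℝ) (hΨ : ContDiff ℝ (⊤ : ℕ∞) Ψ) (p : Pt) (i j : Fin 3) :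
    pd i (pd j Ψ) p = pd j (pd i Ψ) p := by
  have hd1 : Differentiable ℝ Ψ := hΨ.differentiable (by simp)
  have hfd : ContDiff ℝ (⊤ : ℕ∞) (fderiv ℝ Ψ) := hΨ.fderiv_right (by simp)
  have hfd' : DifferentiableAt ℝ (fderiv ℝ Ψ) p := (hfd.differentiable (by simp)) p
  have hsymm := second_derivative_symmetric (f := Ψ) (f' := fderiv ℝ Ψ)
    (fun y => (hd1 y).hasFDerivAt) hfd'.hasFDerivAt (e3 i) (e3 j)
  have key : ∀ k l : Fin 3, pd k (pd l Ψ) p = (fderiv ℝ (fderiv ℝ Ψ) p (e3 k)) (e3 l) := by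
    intro k l
    have h1 : pd k (pd l Ψ) p
        = (fderiv ℝ (fun q => (fderiv ℝ Ψ q) (e3 l)) p) (e3 k) := rfl
    rw [h1, fderiv_clm_apply hfd' (differentiableAt_const _)]
    simp
  rw [key i j, key j i, hsymm]

lemma pd_add (α : Fin 3) (p : Pt) {f g : Pt → ℝ} (hf : DifferentiableAt ℝ f p)
    (hg : DifferentiableAt ℝ g p) :
    pd α (fun q => f q + g q) p = pd α f p + pd α g p := by
  simp [pd, fderiv_fun_add hf hg]

lemma pd_neg (α : Fin 3) (p : Pt) (f : Pt → ℝ) :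
    pd α (fun q => -f q) p = -pd α f p := by
  simp [pd, fderiv_neg]

lemma pd_mul (α : Fin 3) (p : Pt) {f g : Pt → ℝ} (hf : DifferentiableAt ℝ f p)
    (hg : DifferentiableAt ℝ g p) :
    pd α (fun q => f q * g q) p = f p * pd α g p + g p * pd α f p := by
  simp [pd, fderiv_fun_mul hf hg]

lemma pd_const_mul (α : Fin 3) (p : Pt) {f : Pt → ℝ} (hf : DifferentiableAt ℝ f p) (c : ℝ) :
    pd α (fun q => c * f q) p = c * pd α f p := by
  simp [pd, fderiv_const_mul hf c]

lemma pd_inv (α : Fin 3) (p : Pt) {f : Pt → ℝ} (hf : DifferentiableAt ℝ f p)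
    (h0 : f p ≠ 0) :
    pd α (fun q => (f q)⁻¹) p = -(pd α f p / f p ^ 2) := by
  have h1 : fderiv ℝ (fun q => (f q)⁻¹) p
      = (fderiv ℝ (fun x : ℝ => x⁻¹) (f p)).comp (fderiv ℝ f p) :=
    fderiv_comp p (differentiableAt_inv h0) hf
  rw [pd, h1]
  simp [fderiv_inv, pd]
  ring

lemma pd_coord1 (α : Fin 3) (p : Pt) :
    pd α (fun q : Pt => q.2.1) p = (e3 α).2.1 := by
  have h : HasFDerivAt (fun q : Pt => q.2.1) aux_c1 p := aux_c1.hasFDerivAt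
  rw [pd, h.fderiv]
  rfl

lemma pd_coord2 (α : Fin 3) (p : Pt) :
    pd α (fun q : Pt => q.2.2) p = (e3 α).2.2 := by
  have h : HasFDerivAt (fun q : Pt => q.2.2) aux_c2 p := aux_c2.hasFDerivAt
  rw [pd, h.fderiv]
  rfl

lemma rr_hasFDeriv (p : Pt) (h : 0 < rr p) :
    HasFDerivAt rr ((1 / (2 * rr p)) •
      ((p.2.1 • aux_c1 + p.2.1 • aux_c1) + (p.2.2 • aux_c2 + p.2.2 • aux_c2))) p := by
  have hs : (0:ℝ) < p.2.1 ^ 2 + p.2.2 ^ 2 := by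
    rw [rr, Real.sqrt_pos] at h; exact h
  have hg : HasFDerivAt (fun q : Pt => q.2.1 * q.2.1 + q.2.2 * q.2.2)
      ((p.2.1 • aux_c1 + p.2.1 • aux_c1) + (p.2.2 • aux_c2 + p.2.2 • aux_c2)) p :=
    (aux_c1.hasFDerivAt.mul aux_c1.hasFDerivAt).add (aux_c2.hasFDerivAt.mul aux_c2.hasFDerivAt)
  have heq : (fun q : Pt => q.2.1 ^ 2 + q.2.2 ^ 2) = fun q : Pt => q.2.1 * q.2.1 + q.2.2 * q.2.2 := by
    funext q; ring
  have hg2 : HasFDerivAt (fun q : Pt => q.2.1 ^ 2 + q.2.2 ^ 2)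
      ((p.2.1 • aux_c1 + p.2.1 • aux_c1) + (p.2.2 • aux_c2 + p.2.2 • aux_c2)) p := heq ▸ hg
  have hsq : HasDerivAt Real.sqrt (1 / (2 * Real.sqrt (p.2.1 ^ 2 + p.2.2 ^ 2)))
      (p.2.1 ^ 2 + p.2.2 ^ 2) := Real.hasDerivAt_sqrt hs.ne'
  exact hsq.comp_hasFDerivAt p hg2

lemma differentiableAt_rr {p : Pt} (h : 0 < rr p) : DifferentiableAt ℝ rr p :=
  (rr_hasFDeriv p h).differentiableAt

lemma pd_rr (α : Fin 3) {p : Pt} (h : 0 < rr p) :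
    pd α rr p = (p.2.1 * (e3 α).2.1 + p.2.2 * (e3 α).2.2) / rr p := by
  rw [pd, (rr_hasFDeriv p h).fderiv]
  have h1 : aux_c1 (e3 α) = (e3 α).2.1 := rfl
  have h2 : aux_c2 (e3 α) = (e3 α).2.2 := rfl
  simp only [ContinuousLinearMap.coe_smul', Pi.smul_apply, ContinuousLinearMap.add_apply, h1, h2,
    smul_eq_mul]
  field_simp
  ring

/-- `S = m^{γδ} ∂_γΨ ∂_δΨ` -/
def Sf (Ψ : Pt → ℝ) (q : Pt) : ℝ :=
  -(pd 0 Ψ q * pd 0 Ψ q) + (pd 1 Ψ q * pd 1 Ψ q + pd 2 Ψ q * pd 2 Ψ q)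

/-- `C = x¹∂_1Ψ + x²∂_2Ψ = r ∂_r Ψ` -/
def Cf (Ψ : Pt → ℝ) (q : Pt) : ℝ := q.2.1 * pd 1 Ψ q + q.2.2 * pd 2 Ψ q

/-- `D = L̅Ψ` -/
def Df (Ψ : Pt → ℝ) (q : Pt) : ℝ := pd 0 Ψ q + -(Cf Ψ q * (rr q)⁻¹)

/-- divergence identity for `J₂`. -/
theorem divergence_J2 (Ψ : Pt → ℝ) (hΨ : ContDiff ℝ (⊤ : ℕ∞) Ψ) (p : Pt)
    (hr : 0 < rr p) :
    divg (J2 Ψ) p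
      = -(Box Ψ p) * dvec (Lbv p) Ψ p
        + (1 / (2 * rr p ^ 3)) * (dvec (Ov p) Ψ p) ^ 2
        + (1 / (2 * rr p)) * (dvec (Lv p) Ψ p * dvec (Lbv p) Ψ p) := by
  have hrne : rr p ≠ 0 := hr.ne'
  -- differentiability facts
  have hdψ : ∀ i : Fin 3, DifferentiableAt ℝ (pd i Ψ) p := fun i =>
    ((contDiff_pd Ψ hΨ i).differentiable (by simp)) p
  have hx1 : DifferentiableAt ℝ (fun q : Pt => q.2.1) p := aux_c1.differentiableAt
  have hx2 : DifferentiableAt ℝ (fun q : Pt => q.2.2) p := aux_c2.differentiableAt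
  have hdr : DifferentiableAt ℝ rr p := differentiableAt_rr hr
  have hdrinv : DifferentiableAt ℝ (fun q => (rr q)⁻¹) p := hdr.inv hrne
  have hdC : DifferentiableAt ℝ (Cf Ψ) p := (hx1.mul (hdψ 1)).add (hx2.mul (hdψ 2))
  have hdD : DifferentiableAt ℝ (Df Ψ) p := (hdψ 0).add ((hdC.mul hdrinv).neg)
  have hdS : DifferentiableAt ℝ (Sf Ψ) p :=
    (((hdψ 0).mul (hdψ 0)).neg).add (((hdψ 1).mul (hdψ 1)).add (((hdψ 2).mul (hdψ 2))))
  -- the components of J2 in convenient form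
  have hJ0 : (fun q => J2 Ψ q 0) = fun q => pd 0 Ψ q * Df Ψ q + 2⁻¹ * Sf Ψ q := by
    funext q
    simp [J2, Qcomp, Lbv, mlow, Df, Cf, Sf, Fin.sum_univ_three, Matrix.vecHead, Matrix.vecTail]
    ring
  have hJ1 : (fun q => J2 Ψ q 1)
      = fun q => -(pd 1 Ψ q * Df Ψ q) + -(q.2.1 * (rr q)⁻¹ * (2⁻¹ * Sf Ψ q)) := by
    funext q
    simp [J2, Qcomp, Lbv, mlow, Df, Cf, Sf, Fin.sum_univ_three, Matrix.vecHead, Matrix.vecTail]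
    ring
  have hJ2 : (fun q => J2 Ψ q 2)
      = fun q => -(pd 2 Ψ q * Df Ψ q) + -(q.2.2 * (rr q)⁻¹ * (2⁻¹ * Sf Ψ q)) := by
    funext q
    simp [J2, Qcomp, Lbv, mlow, Df, Cf, Sf, Fin.sum_univ_three, Matrix.vecHead, Matrix.vecTail]
    ring
  -- derivative of `(rr ·)⁻¹`
  have pdrinv : ∀ α : Fin 3, pd α (fun q => (rr q)⁻¹) p
      = -((p.2.1 * (e3 α).2.1 + p.2.2 * (e3 α).2.2) / rr p / rr p ^ 2) := by
    intro α
    rw [pd_inv α p hdr hrne, pd_rr α hr]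
  -- derivative of Cf
  have pdC : ∀ α : Fin 3, pd α (Cf Ψ) p
      = ((e3 α).2.1 * pd 1 Ψ p + p.2.1 * pd α (pd 1 Ψ) p)
        + ((e3 α).2.2 * pd 2 Ψ p + p.2.2 * pd α (pd 2 Ψ) p) := by
    intro α
    have h1 : pd α (fun q : Pt => q.2.1 * pd 1 Ψ q + q.2.2 * pd 2 Ψ q) p
        = pd α (fun q : Pt => q.2.1 * pd 1 Ψ q) p + pd α (fun q : Pt => q.2.2 * pd 2 Ψ q) p :=
      pd_add α p (hx1.mul (hdψ 1)) (hx2.mul (hdψ 2))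
    have h2 : pd α (fun q : Pt => q.2.1 * pd 1 Ψ q) p
        = p.2.1 * pd α (pd 1 Ψ) p + pd 1 Ψ p * pd α (fun q : Pt => q.2.1) p :=
      pd_mul α p hx1 (hdψ 1)
    have h3 : pd α (fun q : Pt => q.2.2 * pd 2 Ψ q) p
        = p.2.2 * pd α (pd 2 Ψ) p + pd 2 Ψ p * pd α (fun q : Pt => q.2.2) p :=
      pd_mul α p hx2 (hdψ 2)
    show pd α (fun q : Pt => q.2.1 * pd 1 Ψ q + q.2.2 * pd 2 Ψ q) p = _
    rw [h1, h2, h3, pd_coord1, pd_coord2]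
    ring
  -- derivative of Df
  have pdD : ∀ α : Fin 3, pd α (Df Ψ) p
      = pd α (pd 0 Ψ) p
        + -(Cf Ψ p * (-((p.2.1 * (e3 α).2.1 + p.2.2 * (e3 α).2.2) / rr p / rr p ^ 2))
            + (rr p)⁻¹ * (((e3 α).2.1 * pd 1 Ψ p + p.2.1 * pd α (pd 1 Ψ) p)
              + ((e3 α).2.2 * pd 2 Ψ p + p.2.2 * pd α (pd 2 Ψ) p))) := by
    intro α
    have h1 : pd α (fun q => pd 0 Ψ q + -(Cf Ψ q * (rr q)⁻¹)) p
        = pd α (pd 0 Ψ) p + pd α (fun q => -(Cf Ψ q * (rr q)⁻¹)) p :=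
      pd_add α p (hdψ 0) ((hdC.mul hdrinv).neg)
    have h2 : pd α (fun q => -(Cf Ψ q * (rr q)⁻¹)) p
        = -pd α (fun q => Cf Ψ q * (rr q)⁻¹) p := pd_neg α p _
    have h3 : pd α (fun q => Cf Ψ q * (rr q)⁻¹) p
        = Cf Ψ p * pd α (fun q => (rr q)⁻¹) p + (rr p)⁻¹ * pd α (Cf Ψ) p :=
      pd_mul α p hdC hdrinv
    show pd α (fun q => pd 0 Ψ q + -(Cf Ψ q * (rr q)⁻¹)) p = _
    rw [h1, h2, h3, pdrinv α, pdC α]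
  -- derivative of Sf
  have pdS : ∀ α : Fin 3, pd α (Sf Ψ) p
      = -(2 * (pd 0 Ψ p * pd α (pd 0 Ψ) p))
        + (2 * (pd 1 Ψ p * pd α (pd 1 Ψ) p) + 2 * (pd 2 Ψ p * pd α (pd 2 Ψ) p)) := by
    intro α
    have h1 : pd α (fun q => -(pd 0 Ψ q * pd 0 Ψ q) + (pd 1 Ψ q * pd 1 Ψ q + pd 2 Ψ q * pd 2 Ψ q)) p
        = pd α (fun q => -(pd 0 Ψ q * pd 0 Ψ q)) p
          + pd α (fun q => pd 1 Ψ q * pd 1 Ψ q + pd 2 Ψ q * pd 2 Ψ q) p :=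
      pd_add α p (((hdψ 0).mul (hdψ 0)).neg) (((hdψ 1).mul (hdψ 1)).add ((hdψ 2).mul (hdψ 2)))
    have h2 : pd α (fun q => -(pd 0 Ψ q * pd 0 Ψ q)) p
        = -pd α (fun q => pd 0 Ψ q * pd 0 Ψ q) p := pd_neg α p _
    have h3 : pd α (fun q => pd 1 Ψ q * pd 1 Ψ q + pd 2 Ψ q * pd 2 Ψ q) p
        = pd α (fun q => pd 1 Ψ q * pd 1 Ψ q) p + pd α (fun q => pd 2 Ψ q * pd 2 Ψ q) p :=
      pd_add α p ((hdψ 1).mul (hdψ 1)) ((hdψ 2).mul (hdψ 2))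
    have h4 : ∀ i : Fin 3, pd α (fun q => pd i Ψ q * pd i Ψ q) p
        = pd i Ψ p * pd α (pd i Ψ) p + pd i Ψ p * pd α (pd i Ψ) p := fun i =>
      pd_mul α p (hdψ i) (hdψ i)
    show pd α (fun q => -(pd 0 Ψ q * pd 0 Ψ q) + (pd 1 Ψ q * pd 1 Ψ q + pd 2 Ψ q * pd 2 Ψ q)) p = _
    rw [h1, h2, h3, h4 0, h4 1, h4 2]
    ring
  -- the three divergence terms
  have T0 : pd 0 (fun q => pd 0 Ψ q * Df Ψ q + 2⁻¹ * Sf Ψ q) p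
      = (pd 0 Ψ p * pd 0 (Df Ψ) p + Df Ψ p * pd 0 (pd 0 Ψ) p) + 2⁻¹ * pd 0 (Sf Ψ) p := by
    have h1 : pd 0 (fun q => pd 0 Ψ q * Df Ψ q + 2⁻¹ * Sf Ψ q) p
        = pd 0 (fun q => pd 0 Ψ q * Df Ψ q) p + pd 0 (fun q => 2⁻¹ * Sf Ψ q) p :=
      pd_add 0 p ((hdψ 0).mul hdD) (hdS.const_mul _)
    have h2 : pd 0 (fun q => pd 0 Ψ q * Df Ψ q) p
        = pd 0 Ψ p * pd 0 (Df Ψ) p + Df Ψ p * pd 0 (pd 0 Ψ) p := pd_mul 0 p (hdψ 0) hdD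
    have h3 : pd 0 (fun q => 2⁻¹ * Sf Ψ q) p = 2⁻¹ * pd 0 (Sf Ψ) p := pd_const_mul 0 p hdS _
    rw [h1, h2, h3]
  have T1 : ∀ α : Fin 3,
      pd α (fun q => -(pd 1 Ψ q * Df Ψ q) + -(q.2.1 * (rr q)⁻¹ * (2⁻¹ * Sf Ψ q))) p
      = -(pd 1 Ψ p * pd α (Df Ψ) p + Df Ψ p * pd α (pd 1 Ψ) p)
        + -((p.2.1 * (rr p)⁻¹) * (2⁻¹ * pd α (Sf Ψ) p)
          + (2⁻¹ * Sf Ψ p) * (p.2.1 * (-((p.2.1 * (e3 α).2.1 + p.2.2 * (e3 α).2.2) / rr p / rr p ^ 2))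
              + (rr p)⁻¹ * (e3 α).2.1)) := by
    intro α
    have hd1 : DifferentiableAt ℝ (fun q : Pt => q.2.1 * (rr q)⁻¹) p := hx1.mul hdrinv
    have h1 : pd α (fun q => -(pd 1 Ψ q * Df Ψ q) + -(q.2.1 * (rr q)⁻¹ * (2⁻¹ * Sf Ψ q))) p
        = pd α (fun q => -(pd 1 Ψ q * Df Ψ q)) p
          + pd α (fun q => -(q.2.1 * (rr q)⁻¹ * (2⁻¹ * Sf Ψ q))) p :=
      pd_add α p (((hdψ 1).mul hdD).neg) ((hd1.mul (hdS.const_mul _)).neg)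
    have h2 : pd α (fun q => -(pd 1 Ψ q * Df Ψ q)) p
        = -pd α (fun q => pd 1 Ψ q * Df Ψ q) p := pd_neg α p _
    have h3 : pd α (fun q => pd 1 Ψ q * Df Ψ q) p
        = pd 1 Ψ p * pd α (Df Ψ) p + Df Ψ p * pd α (pd 1 Ψ) p := pd_mul α p (hdψ 1) hdD
    have h4 : pd α (fun q => -(q.2.1 * (rr q)⁻¹ * (2⁻¹ * Sf Ψ q))) p
        = -pd α (fun q => q.2.1 * (rr q)⁻¹ * (2⁻¹ * Sf Ψ q)) p := pd_neg α p _
    have h5 : pd α (fun q => q.2.1 * (rr q)⁻¹ * (2⁻¹ * Sf Ψ q)) p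
        = (p.2.1 * (rr p)⁻¹) * pd α (fun q => 2⁻¹ * Sf Ψ q) p
          + (2⁻¹ * Sf Ψ p) * pd α (fun q : Pt => q.2.1 * (rr q)⁻¹) p :=
      pd_mul α p hd1 (hdS.const_mul _)
    have h6 : pd α (fun q : Pt => q.2.1 * (rr q)⁻¹) p
        = p.2.1 * pd α (fun q => (rr q)⁻¹) p + (rr p)⁻¹ * pd α (fun q : Pt => q.2.1) p :=
      pd_mul α p hx1 hdrinv
    have h7 : pd α (fun q => 2⁻¹ * Sf Ψ q) p = 2⁻¹ * pd α (Sf Ψ) p := pd_const_mul α p hdS _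
    rw [h1, h2, h3, h4, h5, h6, h7, pdrinv α, pd_coord1]
  have T2 : ∀ α : Fin 3,
      pd α (fun q => -(pd 2 Ψ q * Df Ψ q) + -(q.2.2 * (rr q)⁻¹ * (2⁻¹ * Sf Ψ q))) p
      = -(pd 2 Ψ p * pd α (Df Ψ) p + Df Ψ p * pd α (pd 2 Ψ) p)
        + -((p.2.2 * (rr p)⁻¹) * (2⁻¹ * pd α (Sf Ψ) p)
          + (2⁻¹ * Sf Ψ p) * (p.2.2 * (-((p.2.1 * (e3 α).2.1 + p.2.2 * (e3 α).2.2) / rr p / rr p ^ 2))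
              + (rr p)⁻¹ * (e3 α).2.2)) := by
    intro α
    have hd1 : DifferentiableAt ℝ (fun q : Pt => q.2.2 * (rr q)⁻¹) p := hx2.mul hdrinv
    have h1 : pd α (fun q => -(pd 2 Ψ q * Df Ψ q) + -(q.2.2 * (rr q)⁻¹ * (2⁻¹ * Sf Ψ q))) p
        = pd α (fun q => -(pd 2 Ψ q * Df Ψ q)) p
          + pd α (fun q => -(q.2.2 * (rr q)⁻¹ * (2⁻¹ * Sf Ψ q))) p :=
      pd_add α p (((hdψ 2).mul hdD).neg) ((hd1.mul (hdS.const_mul _)).neg)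
    have h2 : pd α (fun q => -(pd 2 Ψ q * Df Ψ q)) p
        = -pd α (fun q => pd 2 Ψ q * Df Ψ q) p := pd_neg α p _
    have h3 : pd α (fun q => pd 2 Ψ q * Df Ψ q) p
        = pd 2 Ψ p * pd α (Df Ψ) p + Df Ψ p * pd α (pd 2 Ψ) p := pd_mul α p (hdψ 2) hdD
    have h4 : pd α (fun q => -(q.2.2 * (rr q)⁻¹ * (2⁻¹ * Sf Ψ q))) p
        = -pd α (fun q => q.2.2 * (rr q)⁻¹ * (2⁻¹ * Sf Ψ q)) p := pd_neg α p _
    have h5 : pd α (fun q => q.2.2 * (rr q)⁻¹ * (2⁻¹ * Sf Ψ q)) p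
        = (p.2.2 * (rr p)⁻¹) * pd α (fun q => 2⁻¹ * Sf Ψ q) p
          + (2⁻¹ * Sf Ψ p) * pd α (fun q : Pt => q.2.2 * (rr q)⁻¹) p :=
      pd_mul α p hd1 (hdS.const_mul _)
    have h6 : pd α (fun q : Pt => q.2.2 * (rr q)⁻¹) p
        = p.2.2 * pd α (fun q => (rr q)⁻¹) p + (rr p)⁻¹ * pd α (fun q : Pt => q.2.2) p :=
      pd_mul α p hx2 hdrinv
    have h7 : pd α (fun q => 2⁻¹ * Sf Ψ q) p = 2⁻¹ * pd α (Sf Ψ) p := pd_const_mul α p hdS _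
    rw [h1, h2, h3, h4, h5, h6, h7, pdrinv α, pd_coord2]
  -- assemble
  have hdiv : divg (J2 Ψ) p
      = pd 0 (fun q => J2 Ψ q 0) p + pd 1 (fun q => J2 Ψ q 1) p + pd 2 (fun q => J2 Ψ q 2) p := by
    simp [divg, Fin.sum_univ_three]
  rw [hdiv, hJ0, hJ1, hJ2, T0, T1 1, T2 2, pdD 0, pdD 1, pdD 2, pdS 0, pdS 1, pdS 2]
  -- symmetry of second derivatives
  rw [pd_pd_symm Ψ hΨ p 1 0, pd_pd_symm Ψ hΨ p 2 0, pd_pd_symm Ψ hΨ p 2 1]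
  -- unfold the right-hand side and remaining abbreviations
  simp only [Box, dvec, Lv, Lbv, Ov, Df, Cf, Sf, Fin.sum_univ_three, e3,
    Matrix.cons_val_zero, Matrix.cons_val_one, Matrix.head_cons, Matrix.cons_val_two,
    Matrix.tail_cons]
  have hsq : p.2.1 ^ 2 + p.2.2 ^ 2 = rr p ^ 2 := (Real.sq_sqrt (by positivity)).symm
  have hs2 : p.2.1 ^ 2 * (rr p)⁻¹ ^ 2 + p.2.2 ^ 2 * (rr p)⁻¹ ^ 2 = 1 := by
    rw [← add_mul, hsq]
    field_simp
  linear_combination (-(pd 0 Ψ p ^ 2) * (rr p)⁻¹ / 2) * hs2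
end
end

section
/- Let μ ∈ ℝ, u̲ = (t+r)/2, and for a smooth Ψ on ℝ^{1+2} (r > 0) define J_3 = (1/4) u̲^{2μ−1} Ψ ( −(L̅Ψ) L − (LΨ) L̅ + (2/r^2)(ΩΨ) Ω ) + ((2μ−1)/8) u̲^{2μ−2} Ψ^2 L̅. Then 𝒟_α J_3^α = (1/2) u̲^{2μ−1} ( −(LΨ)(L̅Ψ) + (1/r^2)(ΩΨ)^2 ) + (1/2) u̲^{2μ−1} Ψ (□Ψ) − ((2μ−1)/(8r)) u̲^{2μ−2} Ψ^2. -/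
noncomputable section

/-- The modified current
`J₃ = (1/4) u̲^{2μ-1} Ψ (-(L̅Ψ)L - (LΨ)L̅ + (2/r²)(ΩΨ)Ω) + ((2μ-1)/8) u̲^{2μ-2} Ψ² L̅`. -/
def J3 (μ : ℝ) (Ψ : Pt → ℝ) (q : Pt) : Fin 3 → ℝ := fun γ =>
  (1 / 4) * ub q ^ (2 * μ - 1) * Ψ q
      * (-(dvec (Lbv q) Ψ q) * Lv q γ - dvec (Lv q) Ψ q * Lbv q γ
          + (2 / rr q ^ 2) * dvec (Ov q) Ψ q * Ov q γ)
    + ((2 * μ - 1) / 8) * ub q ^ (2 * μ - 2) * (Ψ q) ^ 2 * Lbv q γ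

namespace DJ3


abbrev lx : Pt →L[ℝ] ℝ := (ContinuousLinearMap.fst ℝ ℝ ℝ).comp (ContinuousLinearMap.snd ℝ ℝ (ℝ × ℝ))
abbrev ly : Pt →L[ℝ] ℝ := (ContinuousLinearMap.snd ℝ ℝ ℝ).comp (ContinuousLinearMap.snd ℝ ℝ (ℝ × ℝ))

lemma hasFDerivAt_rr {q : Pt} (hq : 0 < rr q) :
    HasFDerivAt rr ((q.2.1 / rr q) • (lx : Pt →L[ℝ] ℝ) + (q.2.2 / rr q) • (ly : Pt →L[ℝ] ℝ)) q := by
  have hx : HasFDerivAt (fun s : Pt => s.2.1) (lx : Pt →L[ℝ] ℝ) q := lx.hasFDerivAt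
  have hy : HasFDerivAt (fun s : Pt => s.2.2) (ly : Pt →L[ℝ] ℝ) q := ly.hasFDerivAt
  have hg : HasFDerivAt (fun s : Pt => s.2.1 ^ 2 + s.2.2 ^ 2)
      ((q.2.1 • (lx : Pt →L[ℝ] ℝ) + q.2.1 • lx) + (q.2.2 • (ly : Pt →L[ℝ] ℝ) + q.2.2 • ly)) q := by
    have := (hx.mul hx).add (hy.mul hy)
    have hfun : (fun s : Pt => s.2.1 ^ 2 + s.2.2 ^ 2) = fun s : Pt => s.2.1 * s.2.1 + s.2.2 * s.2.2 := by
      funext s; ring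
    rw [hfun]; exact this
  have hg0 : q.2.1 ^ 2 + q.2.2 ^ 2 ≠ 0 := by
    intro h
    rw [rr, h] at hq; simp at hq
  have hs := (Real.hasDerivAt_sqrt hg0).comp_hasFDerivAt q hg
  have : rr = (Real.sqrt ∘ fun s : Pt => s.2.1 ^ 2 + s.2.2 ^ 2) := rfl
  rw [this]
  refine hs.congr_fderiv ?_
  have hrr : Real.sqrt (q.2.1 ^ 2 + q.2.2 ^ 2) = rr q := rfl
  refine ContinuousLinearMap.ext fun v => ?_
  simp [hrr]
  field_simp
  ring

lemma hasFDerivAt_ub {q : Pt} (hq : 0 < rr q) :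
    HasFDerivAt ub ((1 / 2 : ℝ) • ((ContinuousLinearMap.fst ℝ ℝ (ℝ × ℝ))
      + ((q.2.1 / rr q) • (lx : Pt →L[ℝ] ℝ) + (q.2.2 / rr q) • (ly : Pt →L[ℝ] ℝ)))) q := by
  have hfun : ub = fun s : Pt => (1 / 2 : ℝ) * (s.1 + rr s) := by
    funext s; rw [ub]; ring
  rw [hfun]
  exact (hasFDerivAt_fst.add (hasFDerivAt_rr hq)).const_mul (1 / 2 : ℝ)

-- pd values of basic atoms
lemma pd_ub {q : Pt} (hq : 0 < rr q) (α : Fin 3) :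
    pd α ub q = ![1 / 2, q.2.1 / (2 * rr q), q.2.2 / (2 * rr q)] α := by
  rw [pd, (hasFDerivAt_ub hq).fderiv]
  fin_cases α <;> simp [e3] <;> ring

lemma pd_rr {q : Pt} (hq : 0 < rr q) (α : Fin 3) :
    pd α rr q = ![0, q.2.1 / rr q, q.2.2 / rr q] α := by
  rw [pd, (hasFDerivAt_rr hq).fderiv]
  fin_cases α <;> simp [e3]

lemma pd_x (q : Pt) (α : Fin 3) : pd α (fun s : Pt => s.2.1) q = ![0, 1, 0] α := by
  have hfun : (fun s : Pt => s.2.1) = ⇑(lx : Pt →L[ℝ] ℝ) := rfl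
  rw [pd, hfun, (lx : Pt →L[ℝ] ℝ).hasFDerivAt.fderiv]
  fin_cases α <;> simp [e3]

lemma pd_y (q : Pt) (α : Fin 3) : pd α (fun s : Pt => s.2.2) q = ![0, 0, 1] α := by
  have hfun : (fun s : Pt => s.2.2) = ⇑(ly : Pt →L[ℝ] ℝ) := rfl
  rw [pd, hfun, (ly : Pt →L[ℝ] ℝ).hasFDerivAt.fderiv]
  fin_cases α <;> simp [e3]

lemma diff_rr {q : Pt} (hq : 0 < rr q) : DifferentiableAt ℝ rr q := (hasFDerivAt_rr hq).differentiableAt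
lemma diff_ub {q : Pt} (hq : 0 < rr q) : DifferentiableAt ℝ ub q := (hasFDerivAt_ub hq).differentiableAt
lemma diff_x (q : Pt) : DifferentiableAt ℝ (fun s : Pt => s.2.1) q := (lx : Pt →L[ℝ] ℝ).differentiableAt
lemma diff_y (q : Pt) : DifferentiableAt ℝ (fun s : Pt => s.2.2) q := (ly : Pt →L[ℝ] ℝ).differentiableAt

-- rpow of ub
lemma pd_ubpow {q : Pt} (hq : 0 < rr q) (hu : 0 < ub q) (c : ℝ) (α : Fin 3) :
    pd α (fun s => ub s ^ c) q = c * ub q ^ (c - 1) * pd α ub q := by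
  have h := (hasFDerivAt_ub hq).rpow_const (p := c) (Or.inl hu.ne')
  rw [pd, h.fderiv, pd, (hasFDerivAt_ub hq).fderiv]
  simp
  ring

lemma diff_ubpow {q : Pt} (hq : 0 < rr q) (hu : 0 < ub q) (c : ℝ) :
    DifferentiableAt ℝ (fun s => ub s ^ c) q :=
  ((hasFDerivAt_ub hq).rpow_const (Or.inl hu.ne')).differentiableAt

-- pd calculus
variable {f g : Pt → ℝ} {q : Pt} {α : Fin 3}

lemma pd_add (hf : DifferentiableAt ℝ f q) (hg : DifferentiableAt ℝ g q) :
    pd α (fun s => f s + g s) q = pd α f q + pd α g q := by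
  simp [pd, fderiv_fun_add hf hg]

lemma pd_sub (hf : DifferentiableAt ℝ f q) (hg : DifferentiableAt ℝ g q) :
    pd α (fun s => f s - g s) q = pd α f q - pd α g q := by
  simp [pd, fderiv_fun_sub hf hg]

lemma pd_mul (hf : DifferentiableAt ℝ f q) (hg : DifferentiableAt ℝ g q) :
    pd α (fun s => f s * g s) q = pd α f q * g q + f q * pd α g q := by
  simp [pd, fderiv_fun_mul hf hg]; ring

lemma pd_const_mul (c : ℝ) (hf : DifferentiableAt ℝ f q) :
    pd α (fun s => c * f s) q = c * pd α f q := by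
  simp [pd, fderiv_const_mul hf]

lemma pd_div (hf : DifferentiableAt ℝ f q) (hg : DifferentiableAt ℝ g q) (h0 : g q ≠ 0) :
    pd α (fun s => f s / g s) q = (pd α f q * g q - f q * pd α g q) / g q ^ 2 := by
  have hinv : HasFDerivAt (fun s => (g s)⁻¹) ((-(g q ^ 2)⁻¹) • fderiv ℝ g q) q := by
    exact (hasDerivAt_inv h0).comp_hasFDerivAt q hg.hasFDerivAt
  have hfun : (fun s => f s / g s) = fun s => f s * (g s)⁻¹ := by
    funext s; rw [div_eq_mul_inv]
  rw [hfun, pd, fderiv_fun_mul hf hinv.differentiableAt, hinv.fderiv]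
  simp only [ContinuousLinearMap.add_apply, ContinuousLinearMap.smul_apply, smul_eq_mul]
  rw [show (fderiv ℝ g q) (e3 α) = pd α g q from rfl, show (fderiv ℝ f q) (e3 α) = pd α f q from rfl]
  field_simp
  ring


def K0 (μ : ℝ) (Ψ : Pt → ℝ) (q : Pt) : ℝ :=
  -(1 / 2) * (ub q ^ (2 * μ - 1) * (Ψ q * pd 0 Ψ q))
    + (2 * μ - 1) / 8 * (ub q ^ (2 * μ - 2) * (Ψ q * Ψ q))

def K1 (μ : ℝ) (Ψ : Pt → ℝ) (q : Pt) : ℝ :=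
  (1 / 2) * (ub q ^ (2 * μ - 1) * (Ψ q * pd 1 Ψ q))
    + (-(2 * μ - 1) / 8) * ((ub q ^ (2 * μ - 2) * (Ψ q * Ψ q)) * (q.2.1 / rr q))

def K2 (μ : ℝ) (Ψ : Pt → ℝ) (q : Pt) : ℝ :=
  (1 / 2) * (ub q ^ (2 * μ - 1) * (Ψ q * pd 2 Ψ q))
    + (-(2 * μ - 1) / 8) * ((ub q ^ (2 * μ - 2) * (Ψ q * Ψ q)) * (q.2.2 / rr q))

def Kf (μ : ℝ) (Ψ : Pt → ℝ) (q : Pt) : Fin 3 → ℝ := ![K0 μ Ψ q, K1 μ Ψ q, K2 μ Ψ q]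

lemma J3_eq_K (μ : ℝ) (Ψ : Pt → ℝ) {q : Pt} (hq : 0 < rr q) (γ : Fin 3) :
    J3 μ Ψ q γ = Kf μ Ψ q γ := by
  have h2 : rr q ^ 2 = q.2.1 ^ 2 + q.2.2 ^ 2 := Real.sq_sqrt (by positivity)
  have hrne : rr q ≠ 0 := hq.ne'
  fin_cases γ <;>
    simp only [J3, Kf, K0, K1, K2, dvec, Lv, Lbv, Ov, Fin.sum_univ_three, Fin.isValue,
      Matrix.cons_val_zero, Matrix.cons_val_one, Matrix.head_cons, Matrix.cons_val_two,
      Matrix.tail_cons, Fin.zero_eta, Fin.mk_one, Fin.reduceFinMk]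
  · field_simp; ring
  · field_simp
    linear_combination (-32 * ub q ^ (2 * μ - 1) * Ψ q * pd 1 Ψ q) * h2
  · field_simp
    linear_combination (-32 * ub q ^ (2 * μ - 1) * Ψ q * pd 2 Ψ q) * h2

lemma diff_div {f g : Pt → ℝ} {q : Pt} (hf : DifferentiableAt ℝ f q)
    (hg : DifferentiableAt ℝ g q) (h0 : g q ≠ 0) :
    DifferentiableAt ℝ (fun s => f s / g s) q := by
  have hinv : DifferentiableAt ℝ (fun s => (g s)⁻¹) q :=
    ((hasDerivAt_inv h0).comp_hasFDerivAt q hg.hasFDerivAt).differentiableAt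
  simpa only [div_eq_mul_inv] using hf.fun_mul hinv

lemma contDiff_pd {Ψ : Pt → ℝ} (hΨ : ContDiff ℝ (⊤ : ℕ∞) Ψ) (β : Fin 3) : ContDiff ℝ (⊤ : ℕ∞) (pd β Ψ) :=
  (hΨ.fderiv_right (by simp)).clm_apply contDiff_const

lemma pd_K0 {μ : ℝ} {Ψ : Pt → ℝ} (hΨ : ContDiff ℝ (⊤ : ℕ∞) Ψ) {p : Pt} (hr : 0 < rr p)
    (hu : 0 < ub p) (α : Fin 3) :
    pd α (K0 μ Ψ) p
      = -(1 / 2) * (((2 * μ - 1) * ub p ^ (2 * μ - 2) * pd α ub p) * (Ψ p * pd 0 Ψ p)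
          + ub p ^ (2 * μ - 1) * (pd α Ψ p * pd 0 Ψ p + Ψ p * pd α (pd 0 Ψ) p))
        + (2 * μ - 1) / 8 * (((2 * μ - 2) * ub p ^ (2 * μ - 3) * pd α ub p) * (Ψ p * Ψ p)
          + ub p ^ (2 * μ - 2) * (pd α Ψ p * Ψ p + Ψ p * pd α Ψ p)) := by
  have dP : DifferentiableAt ℝ Ψ p := (hΨ.differentiable (by simp)).differentiableAt
  have dP0 : DifferentiableAt ℝ (pd 0 Ψ) p :=
    ((contDiff_pd hΨ 0).differentiable (by simp)).differentiableAt
  have dA := diff_ubpow hr hu (2 * μ - 1)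
  have dB := diff_ubpow hr hu (2 * μ - 2)
  unfold K0
  rw [pd_add ((dA.fun_mul (dP.fun_mul dP0)).const_mul (-(1 / 2)))
        ((dB.fun_mul (dP.fun_mul dP)).const_mul ((2 * μ - 1) / 8)),
      pd_const_mul _ (dA.fun_mul (dP.fun_mul dP0)), pd_const_mul _ (dB.fun_mul (dP.fun_mul dP)),
      pd_mul dA (dP.fun_mul dP0), pd_mul dP dP0, pd_mul dB (dP.fun_mul dP), pd_mul dP dP,
      pd_ubpow hr hu (2 * μ - 1), pd_ubpow hr hu (2 * μ - 2),
      show (2 * μ - 1 - 1 : ℝ) = 2 * μ - 2 by ring,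
      show (2 * μ - 2 - 1 : ℝ) = 2 * μ - 3 by ring]

lemma pd_K1 {μ : ℝ} {Ψ : Pt → ℝ} (hΨ : ContDiff ℝ (⊤ : ℕ∞) Ψ) {p : Pt} (hr : 0 < rr p)
    (hu : 0 < ub p) (α : Fin 3) :
    pd α (K1 μ Ψ) p
      = (1 / 2) * (((2 * μ - 1) * ub p ^ (2 * μ - 2) * pd α ub p) * (Ψ p * pd 1 Ψ p)
          + ub p ^ (2 * μ - 1) * (pd α Ψ p * pd 1 Ψ p + Ψ p * pd α (pd 1 Ψ) p))
        + (-(2 * μ - 1) / 8) * ((((2 * μ - 2) * ub p ^ (2 * μ - 3) * pd α ub p) * (Ψ p * Ψ p)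
              + ub p ^ (2 * μ - 2) * (pd α Ψ p * Ψ p + Ψ p * pd α Ψ p)) * (p.2.1 / rr p)
            + (ub p ^ (2 * μ - 2) * (Ψ p * Ψ p))
              * ((pd α (fun s : Pt => s.2.1) p * rr p - p.2.1 * pd α rr p) / rr p ^ 2)) := by
  have dP : DifferentiableAt ℝ Ψ p := (hΨ.differentiable (by simp)).differentiableAt
  have dP1 : DifferentiableAt ℝ (pd 1 Ψ) p :=
    ((contDiff_pd hΨ 1).differentiable (by simp)).differentiableAt
  have dA := diff_ubpow hr hu (2 * μ - 1)
  have dB := diff_ubpow hr hu (2 * μ - 2)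
  have dXR : DifferentiableAt ℝ (fun s : Pt => s.2.1 / rr s) p :=
    diff_div (diff_x p) (diff_rr hr) hr.ne'
  unfold K1
  rw [pd_add ((dA.fun_mul (dP.fun_mul dP1)).const_mul (1 / 2))
        (((dB.fun_mul (dP.fun_mul dP)).fun_mul dXR).const_mul (-(2 * μ - 1) / 8)),
      pd_const_mul _ (dA.fun_mul (dP.fun_mul dP1)), pd_const_mul _ ((dB.fun_mul (dP.fun_mul dP)).fun_mul dXR),
      pd_mul dA (dP.fun_mul dP1), pd_mul dP dP1,
      pd_mul (dB.fun_mul (dP.fun_mul dP)) dXR, pd_mul dB (dP.fun_mul dP), pd_mul dP dP,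
      pd_div (diff_x p) (diff_rr hr) hr.ne',
      pd_ubpow hr hu (2 * μ - 1), pd_ubpow hr hu (2 * μ - 2),
      show (2 * μ - 1 - 1 : ℝ) = 2 * μ - 2 by ring,
      show (2 * μ - 2 - 1 : ℝ) = 2 * μ - 3 by ring]

lemma pd_K2 {μ : ℝ} {Ψ : Pt → ℝ} (hΨ : ContDiff ℝ (⊤ : ℕ∞) Ψ) {p : Pt} (hr : 0 < rr p)
    (hu : 0 < ub p) (α : Fin 3) :
    pd α (K2 μ Ψ) p
      = (1 / 2) * (((2 * μ - 1) * ub p ^ (2 * μ - 2) * pd α ub p) * (Ψ p * pd 2 Ψ p)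
          + ub p ^ (2 * μ - 1) * (pd α Ψ p * pd 2 Ψ p + Ψ p * pd α (pd 2 Ψ) p))
        + (-(2 * μ - 1) / 8) * ((((2 * μ - 2) * ub p ^ (2 * μ - 3) * pd α ub p) * (Ψ p * Ψ p)
              + ub p ^ (2 * μ - 2) * (pd α Ψ p * Ψ p + Ψ p * pd α Ψ p)) * (p.2.2 / rr p)
            + (ub p ^ (2 * μ - 2) * (Ψ p * Ψ p))
              * ((pd α (fun s : Pt => s.2.2) p * rr p - p.2.2 * pd α rr p) / rr p ^ 2)) := by
  have dP : DifferentiableAt ℝ Ψ p := (hΨ.differentiable (by simp)).differentiableAt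
  have dP2 : DifferentiableAt ℝ (pd 2 Ψ) p :=
    ((contDiff_pd hΨ 2).differentiable (by simp)).differentiableAt
  have dA := diff_ubpow hr hu (2 * μ - 1)
  have dB := diff_ubpow hr hu (2 * μ - 2)
  have dYR : DifferentiableAt ℝ (fun s : Pt => s.2.2 / rr s) p :=
    diff_div (diff_y p) (diff_rr hr) hr.ne'
  unfold K2
  rw [pd_add ((dA.fun_mul (dP.fun_mul dP2)).const_mul (1 / 2))
        (((dB.fun_mul (dP.fun_mul dP)).fun_mul dYR).const_mul (-(2 * μ - 1) / 8)),
      pd_const_mul _ (dA.fun_mul (dP.fun_mul dP2)), pd_const_mul _ ((dB.fun_mul (dP.fun_mul dP)).fun_mul dYR),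
      pd_mul dA (dP.fun_mul dP2), pd_mul dP dP2,
      pd_mul (dB.fun_mul (dP.fun_mul dP)) dYR, pd_mul dB (dP.fun_mul dP), pd_mul dP dP,
      pd_div (diff_y p) (diff_rr hr) hr.ne',
      pd_ubpow hr hu (2 * μ - 1), pd_ubpow hr hu (2 * μ - 2),
      show (2 * μ - 1 - 1 : ℝ) = 2 * μ - 2 by ring,
      show (2 * μ - 2 - 1 : ℝ) = 2 * μ - 3 by ring]

lemma continuous_rr : Continuous rr := by
  apply Real.continuous_sqrt.comp
  fun_prop

end DJ3

/-- divergence identity for `J₃`. -/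
theorem divergence_J3 (μ : ℝ) (Ψ : Pt → ℝ) (hΨ : ContDiff ℝ (⊤ : ℕ∞) Ψ) (p : Pt)
    (hr : 0 < rr p) (hu : 0 < ub p) :
    divg (J3 μ Ψ) p
      = (1 / 2) * ub p ^ (2 * μ - 1)
          * (-(dvec (Lv p) Ψ p * dvec (Lbv p) Ψ p)
              + (1 / rr p ^ 2) * (dvec (Ov p) Ψ p) ^ 2)
        + (1 / 2) * ub p ^ (2 * μ - 1) * Ψ p * Box Ψ p
        - ((2 * μ - 1) / (8 * rr p)) * ub p ^ (2 * μ - 2) * (Ψ p) ^ 2 := by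

  have hrc : ∀ᶠ q in nhds p, 0 < rr q :=
    DJ3.continuous_rr.continuousAt.eventually (eventually_gt_nhds hr)
  have hKpd : ∀ α γ : Fin 3, pd α (fun q => J3 μ Ψ q γ) p = pd α (fun q => DJ3.Kf μ Ψ q γ) p := by
    intro α γ
    unfold pd
    congr 1
    exact Filter.EventuallyEq.fderiv_eq (hrc.mono fun q hq => DJ3.J3_eq_K μ Ψ hq γ)
  have hK0 : (fun q => DJ3.Kf μ Ψ q 0) = DJ3.K0 μ Ψ := rfl
  have hK1 : (fun q => DJ3.Kf μ Ψ q 1) = DJ3.K1 μ Ψ := rfl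
  have hK2 : (fun q => DJ3.Kf μ Ψ q 2) = DJ3.K2 μ Ψ := rfl
  have hr2 : rr p ^ 2 = p.2.1 ^ 2 + p.2.2 ^ 2 := Real.sq_sqrt (by positivity)
  rw [divg, Fin.sum_univ_three, hKpd 0 0, hKpd 1 1, hKpd 2 2, hK0, hK1, hK2,
      DJ3.pd_K0 hΨ hr hu 0, DJ3.pd_K1 hΨ hr hu 1, DJ3.pd_K2 hΨ hr hu 2,
      DJ3.pd_ub hr 0, DJ3.pd_ub hr 1, DJ3.pd_ub hr 2, DJ3.pd_rr hr 1, DJ3.pd_rr hr 2,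
      DJ3.pd_x p 1, DJ3.pd_y p 2]
  simp only [dvec, Lv, Lbv, Ov, Box, Fin.sum_univ_three, Fin.isValue,
    Matrix.cons_val_zero, Matrix.cons_val_one, Matrix.head_cons, Matrix.cons_val_two,
    Matrix.tail_cons]
  generalize ub p ^ (2 * μ - 1) = U1
  generalize ub p ^ (2 * μ - 2) = U2
  generalize ub p ^ (2 * μ - 3) = U3
  field_simp
  linear_combination
    (-(8 : ℝ) * μ * Ψ p ^ 2 * U2
      + 4 * Ψ p ^ 2 * U2
      - 12 * μ * Ψ p ^ 2 * U3 * rr p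
      + 8 * μ ^ 2 * Ψ p ^ 2 * U3 * rr p
      + 4 * Ψ p ^ 2 * U3 * rr p
      + 16 * U1 * rr p * (pd 1 Ψ p ^ 2 + pd 2 Ψ p ^ 2)) * hr2
end
end
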